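/- arXiv:2505.09640 — 6 statements merged into one kernel-verified Lean document; each statement's English description precedes it below -/
import Mathlib

section
/- Let M be a k-class model over a finite feature set X, let e be an entity, and let x ∈ X. Then x is necessary for the prediction M(e) (i.e., x belongs to every sufficient reason for M(e)) if and only if there exists a value b ∈ D_x such that M(e) ≠ M(e_{x=b}). -/
/-- `S` is a reason for the prediction `M e`: every entity agreeing with `e` on `S`
gets the same prediction. -/
def IsReason {X : Type*} {D : X → Type*} {C : Type*}
    (M : (∀ x, D x) → C) (e : ∀ x, D x) (S : Set X) : Prop :=
  ∀ e' : ∀ x, D x, (∀ x ∈ S, e' x = e x) → M e' = M e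

/-- `S` is a sufficient reason: a reason that is minimal with respect to being a reason. -/
def IsSufficientReason {X : Type*} {D : X → Type*} {C : Type*}
    (M : (∀ x, D x) → C) (e : ∀ x, D x) (S : Set X) : Prop :=
  IsReason M e S ∧ ∀ S' ⊂ S, ¬ IsReason M e S'

/-- Feature `x` is necessary for the prediction `M e`: it belongs to every sufficient reason. -/
def IsNecessary {X : Type*} {D : X → Type*} {C : Type*}
    (M : (∀ x, D x) → C) (e : ∀ x, D x) (x : X) : Prop :=
  ∀ S : Set X, IsSufficientReason M e S → x ∈ S

section Reasons

variable {X : Type*} {D : X → Type*} {C : Type*} {M : (∀ x, D x) → C} {e : ∀ x, D x}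

theorem isSufficientReason_iff_minimal {S : Set X} :
    IsSufficientReason M e S ↔ Minimal (IsReason M e) S :=
  Set.minimal_iff_forall_ssubset.symm

theorem IsReason.mono {S T : Set X} (hS : IsReason M e S) (hST : S ⊆ T) : IsReason M e T :=
  fun e' he' ↦ hS e' fun y hy ↦ he' y (hST hy)

theorem IsReason.exists_isSufficientReason_subset [Finite X] {S : Set X} (hS : IsReason M e S) :
    ∃ T ⊆ S, IsSufficientReason M e T := by
  simp only [isSufficientReason_iff_minimal]
  exact exists_minimal_le_of_wellFoundedLT _ S hS

theorem isReason_compl_singleton_iff [DecidableEq X] {x : X} :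
    IsReason M e {x}ᶜ ↔ ∀ b : D x, M (Function.update e x b) = M e := by
  refine ⟨fun h b ↦ h _ fun y hy ↦ Function.update_of_ne hy _ _, fun h e' he' ↦ ?_⟩
  have he' : Function.update e x (e' x) = e' := by
    ext y
    by_cases hy : y = x
    · subst hy
      exact Function.update_self ..
    · exact (Function.update_of_ne hy _ _).trans (he' y hy).symm
  rw [← he', h]

theorem isNecessary_iff_not_isReason_compl_singleton [Finite X] {x : X} :
    IsNecessary M e x ↔ ¬ IsReason M e {x}ᶜ := by
  refine ⟨fun hx hcompl ↦ ?_, fun hcompl S hS ↦ ?_⟩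
  · obtain ⟨T, hTx, hT⟩ := hcompl.exists_isSufficientReason_subset
    exact hTx (hx T hT) rfl
  · by_contra hxS
    exact hcompl (hS.1.mono (Set.subset_compl_singleton_iff.mpr hxS))

end Reasons

theorem necessary_iff_exists_flip_general
    {X : Type*} [Finite X] [DecidableEq X] {D : X → Type*}
    {C : Type*}
    (M : (∀ x, D x) → C) (e : ∀ x, D x) (x : X) :
    IsNecessary M e x ↔ ∃ b : D x, M e ≠ M (Function.update e x b) := by
  rw [isNecessary_iff_not_isReason_compl_singleton, isReason_compl_singleton_iff]
  simp only [not_forall, ne_comm]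

/-- Characterization of necessary features: `x` is necessary for `M e` iff
flipping `x` to some value `b` changes the prediction. -/
theorem necessary_iff_exists_flip
    {X : Type*} [Finite X] [DecidableEq X] {D : X → Type*} [∀ x, Nonempty (D x)]
    {C : Type*} [Finite C]
    (M : (∀ x, D x) → C) (e : ∀ x, D x) (x : X) :
    IsNecessary M e x ↔ ∃ b : D x, M e ≠ M (Function.update e x b) :=
  necessary_iff_exists_flip_general M e x
end

section
/- Let M be a k-class model over a finite feature set X and let x ∈ X. The following are equivalent: (i) x is useful for M, i.e., there exist an entity e and b ∈ D_x with M(e) ≠ M(e_{x=b}); (ii) there exists an entity e such that x is necessary for M(e), i.e., x belongs to every sufficient reason for M(e); (iii) there exists an entity e such that x is relevant for M(e), i.e., x belongs to some sufficient reason for M(e). -/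
/-- Feature `x` is relevant for the prediction `M e`: it belongs to some sufficient reason. -/
def IsRelevant {X : Type*} {D : X → Type*} {C : Type*}
    (M : (∀ x, D x) → C) (e : ∀ x, D x) (x : X) : Prop :=
  ∃ S : Set X, IsSufficientReason M e S ∧ x ∈ S

/-- Feature `x` is useful for the model `M`: there is an entity whose prediction changes
when the value of `x` is changed to some `b`. -/
def IsUseful {X : Type*} [DecidableEq X] {D : X → Type*} {C : Type*}
    (M : (∀ x, D x) → C) (x : X) : Prop :=
  ∃ (e : ∀ y, D y) (b : D x), M e ≠ M (Function.update e x b)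

section

variable {X : Type*} {D : X → Type*} {C : Type*} {M : (∀ x, D x) → C} {e : ∀ x, D x}

theorem isReason_univ : IsReason M e Set.univ := fun _ he' =>
  congrArg M (funext fun y => he' y (Set.mem_univ y))

theorem IsReason.mem_of_apply_update_ne [DecidableEq X] {S : Set X} (hS : IsReason M e S)
    {x : X} {b : D x} (hb : M e ≠ M (Function.update e x b)) : x ∈ S := by
  by_contra hx
  refine hb (hS _ fun y hy => ?_).symm
  exact Function.update_of_ne (ne_of_mem_of_not_mem hy hx) _ _

theorem isNecessary_of_apply_update_ne [DecidableEq X] {x : X} {b : D x}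
    (hb : M e ≠ M (Function.update e x b)) : IsNecessary M e x :=
  fun _ hS => hS.1.mem_of_apply_update_ne hb

theorem IsNecessary.isRelevant [Finite X] {x : X} (hx : IsNecessary M e x) :
    IsRelevant M e x := by
  obtain ⟨T, -, hT⟩ := isReason_univ.exists_isSufficientReason_subset (M := M) (e := e)
  exact ⟨T, hT, hx T hT⟩

theorem IsRelevant.isUseful [DecidableEq X] {x : X} (hx : IsRelevant M e x) : IsUseful M x := by
  obtain ⟨S, ⟨hS, hS_min⟩, hxS⟩ := hx
  have h_not_reason : ¬ IsReason M e (S \ {x}) :=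
    hS_min _ (Set.sdiff_singleton_ssubset.mpr hxS)
  simp only [IsReason, not_forall] at h_not_reason
  obtain ⟨e', he', hMe'⟩ := h_not_reason
  have h_reset : M (Function.update e' x (e x)) = M e := by
    refine hS _ fun y hy => ?_
    rcases eq_or_ne y x with rfl | hyx
    · exact Function.update_self _ _ _
    · rw [Function.update_of_ne hyx]
      exact he' y ⟨hy, hyx⟩
  refine ⟨Function.update e' x (e x), e' x, ?_⟩
  rwa [Function.update_idem, Function.update_eq_self, h_reset, ne_comm]

end

theorem useful_iff_exists_necessary_iff_exists_relevant_general
    {X : Type*} [Finite X] [DecidableEq X] {D : X → Type*}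
    {C : Type*}
    (M : (∀ x, D x) → C) (x : X) :
    (IsUseful M x ↔ ∃ e : ∀ y, D y, IsNecessary M e x) ∧
      (IsUseful M x ↔ ∃ e : ∀ y, D y, IsRelevant M e x) := by
  have useful_necessary : IsUseful M x → ∃ e : ∀ y, D y, IsNecessary M e x :=
    fun ⟨e, _, hb⟩ => ⟨e, isNecessary_of_apply_update_ne hb⟩
  have necessary_relevant :
      (∃ e : ∀ y, D y, IsNecessary M e x) → ∃ e : ∀ y, D y, IsRelevant M e x :=
    fun ⟨e, he⟩ => ⟨e, he.isRelevant⟩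
  have relevant_useful : (∃ e : ∀ y, D y, IsRelevant M e x) → IsUseful M x :=
    fun ⟨_, he⟩ => he.isUseful
  exact ⟨⟨useful_necessary, relevant_useful ∘ necessary_relevant⟩,
    ⟨necessary_relevant ∘ useful_necessary, relevant_useful⟩⟩

/-- Characterization of useful features: `x` is useful for `M` iff it is necessary for
some prediction, iff it is relevant for some prediction. -/
theorem useful_iff_exists_necessary_iff_exists_relevant
    {X : Type*} [Finite X] [DecidableEq X] {D : X → Type*} [∀ x, Nonempty (D x)]
    {C : Type*} [Finite C]
    (M : (∀ x, D x) → C) (x : X) :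
    (IsUseful M x ↔ ∃ e : ∀ y, D y, IsNecessary M e x) ∧
      (IsUseful M x ↔ ∃ e : ∀ y, D y, IsRelevant M e x) :=
  useful_iff_exists_necessary_iff_exists_relevant_general M x
end

section
/- Let M be a Boolean model over a finite feature set X given in conjunctive normal form: there are a finite index set I and, for each i ∈ I, a finite set L_i of literals, where a literal ℓ consists of a feature feat(ℓ) ∈ X together with a subset pred(ℓ) ⊆ D_{feat(ℓ)}, and ℓ is satisfied by an entity e' iff e'(feat(ℓ)) ∈ pred(ℓ); M(e') = 1 iff for every i ∈ I some literal of L_i is satisfied by e'. Assume no clause is tautologically true, i.e., for every i ∈ I there exists an entity satisfying no literal of L_i. Let e be an entity with M(e) = 1, and define the hypergraph H on node set X whose hyperedges are the sets B_i = { feat(ℓ) : ℓ ∈ L_i and ℓ is satisfied by e }, for i ∈ I. Then a set S ⊆ X is a sufficient reason for M(e) if and only if S is a minimal hitting set of H. -/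
theorem isSufficientReason_iff_of_isReason_iff {X : Type*} {D : X → Type*} {C : Type*}
    {M : (∀ x, D x) → C} {e : ∀ x, D x} {P : Set X → Prop}
    (h : ∀ T, IsReason M e T ↔ P T) (S : Set X) :
    IsSufficientReason M e S ↔ P S ∧ ∀ S' ⊂ S, ¬ P S' := by
  simp only [IsSufficientReason, h]

section Clause

variable {X : Type*} {D : X → Type*}

def satisfiedFeatures (K : Set ((x : X) × Set (D x))) (e : ∀ x, D x) : Set X :=
  {x | ∃ ℓ ∈ K, e ℓ.1 ∈ ℓ.2 ∧ ℓ.1 = x}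

theorem exists_mem_of_eqOn_satisfiedFeatures {K : Set ((x : X) × Set (D x))}
    {e e' : ∀ x, D x} {T : Set X} (hT : (T ∩ satisfiedFeatures K e).Nonempty)
    (he' : ∀ x ∈ T, e' x = e x) : ∃ ℓ ∈ K, e' ℓ.1 ∈ ℓ.2 := by
  obtain ⟨_, hxT, ℓ, hℓK, hℓe, rfl⟩ := hT
  exact ⟨ℓ, hℓK, (he' _ hxT).symm ▸ hℓe⟩

theorem piecewise_notMem_of_inter_satisfiedFeatures_eq_empty
    {K : Set ((x : X) × Set (D x))} {e f : ∀ x, D x} {T : Set X} [DecidablePred (· ∈ T)]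
    (hf : ∀ ℓ ∈ K, f ℓ.1 ∉ ℓ.2) (hT : T ∩ satisfiedFeatures K e = ∅) :
    ∀ ℓ ∈ K, T.piecewise e f ℓ.1 ∉ ℓ.2 := by
  intro ℓ hℓK hℓ
  by_cases hℓT : ℓ.1 ∈ T
  · rw [Set.piecewise_eq_of_mem _ _ _ hℓT] at hℓ
    exact (Set.eq_empty_iff_forall_notMem.mp hT) ℓ.1 ⟨hℓT, ℓ, hℓK, hℓ, rfl⟩
  · rw [Set.piecewise_eq_of_notMem _ _ _ hℓT] at hℓ
    exact hf ℓ hℓK hℓ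

theorem isReason_iff_forall_inter_satisfiedFeatures_nonempty {I : Type*}
    {L : I → Set ((x : X) × Set (D x))} {M : (∀ x, D x) → Bool}
    (hM : ∀ e' : ∀ x, D x, M e' = true ↔ ∀ i : I, ∃ ℓ ∈ L i, e' ℓ.1 ∈ ℓ.2)
    (hnontaut : ∀ i : I, ∃ e' : ∀ x, D x, ∀ ℓ ∈ L i, e' ℓ.1 ∉ ℓ.2)
    {e : ∀ x, D x} (hMe : M e = true) (T : Set X) :
    IsReason M e T ↔ ∀ i, (T ∩ satisfiedFeatures (L i) e).Nonempty := by
  classical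
  refine ⟨fun hT i => ?_, fun hT e' he' => ?_⟩
  · rw [Set.nonempty_iff_ne_empty]
    intro hi
    obtain ⟨f, hf⟩ := hnontaut i
    have hsat : M (T.piecewise e f) = true :=
      (hT _ fun x hx => Set.piecewise_eq_of_mem _ _ _ hx).trans hMe
    obtain ⟨ℓ, hℓK, hℓ⟩ := (hM _).mp hsat i
    exact piecewise_notMem_of_inter_satisfiedFeatures_eq_empty hf hi ℓ hℓK hℓ
  · rw [hMe, hM]
    exact fun i => exists_mem_of_eqOn_satisfiedFeatures (hT i) he'

end Clause

theorem sufficientReason_iff_minimal_hittingSet_general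
    {X : Type*} {D : X → Type*}
    {I : Type*}
    (L : I → Set ((x : X) × Set (D x)))
    (M : (∀ x, D x) → Bool)
    (hM : ∀ e' : ∀ x, D x, M e' = true ↔ ∀ i : I, ∃ ℓ ∈ L i, e' ℓ.1 ∈ ℓ.2)
    (hnontaut : ∀ i : I, ∃ e' : ∀ x, D x, ∀ ℓ ∈ L i, e' ℓ.1 ∉ ℓ.2)
    (e : ∀ x, D x) (hMe : M e = true)
    (B : I → Set X) (hB : ∀ i, B i = {x : X | ∃ ℓ ∈ L i, e ℓ.1 ∈ ℓ.2 ∧ ℓ.1 = x})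
    (S : Set X) :
    IsSufficientReason M e S ↔
      (∀ i : I, (S ∩ B i).Nonempty) ∧
        ∀ S' ⊂ S, ¬ ∀ i : I, (S' ∩ B i).Nonempty := by
  obtain rfl : B = fun i => satisfiedFeatures (L i) e := funext hB
  exact isSufficientReason_iff_of_isReason_iff
    (isReason_iff_forall_inter_satisfiedFeatures_nonempty hM hnontaut hMe) S

/-- Sufficient reasons as minimal hitting sets.  A Boolean model `M` over features `X`
is given in CNF by a finite index set `I` of clauses, the clause `i` being the finite set
`L i` of literals, where a literal is a pair `⟨x, P⟩` of a feature `x` and a set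
`P ⊆ D x` of values, satisfied by `e'` iff `e' x ∈ P`; `M e' = 1` iff each clause has a
literal satisfied by `e'`.  Assuming no clause is tautologically true and `M e = 1`,
a set `S ⊆ X` is a sufficient reason for `M e` iff `S` is a minimal hitting set of the
hypergraph on `X` whose hyperedges are the sets
`B i = {feat ℓ : ℓ ∈ L i satisfied by e}`. -/
theorem sufficientReason_iff_minimal_hittingSet
    {X : Type*} [Finite X] {D : X → Type*} [∀ x, Nonempty (D x)]
    {I : Type*} [Fintype I]
    (L : I → Set ((x : X) × Set (D x))) (hLfin : ∀ i, (L i).Finite)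
    (M : (∀ x, D x) → Bool)
    (hM : ∀ e' : ∀ x, D x, M e' = true ↔ ∀ i : I, ∃ ℓ ∈ L i, e' ℓ.1 ∈ ℓ.2)
    (hnontaut : ∀ i : I, ∃ e' : ∀ x, D x, ∀ ℓ ∈ L i, e' ℓ.1 ∉ ℓ.2)
    (e : ∀ x, D x) (hMe : M e = true)
    (B : I → Set X) (hB : ∀ i, B i = {x : X | ∃ ℓ ∈ L i, e ℓ.1 ∈ ℓ.2 ∧ ℓ.1 = x})
    (S : Set X) :
    IsSufficientReason M e S ↔
      (∀ i : I, (S ∩ B i).Nonempty) ∧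
        ∀ S' ⊂ S, ¬ ∀ i : I, (S' ∩ B i).Nonempty :=
  sufficientReason_iff_minimal_hittingSet_general L M hM hnontaut e hMe B hB S
end

section
/- Let H = (V, E) be a hypergraph with V finite and let W ⊆ V. Then there exists a minimal hitting set S of H with W ⊆ S if and only if there exists a choice of hyperedges (B_w)_{w ∈ W} with w ∈ B_w ∈ E for each w ∈ W, such that no hyperedge B ∈ E satisfies B ⊆ ⋃_{w ∈ W} (B_w \ {w}). -/
/-- `S` is a hitting set of the hypergraph with hyperedge family `E`. -/
def IsHittingSet {V : Type*} (E : Set (Set V)) (S : Set V) : Prop :=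
  ∀ B ∈ E, (S ∩ B).Nonempty

/-- `S` is a minimal hitting set: a hitting set no proper subset of which is
a hitting set. -/
def IsMinimalHittingSet {V : Type*} (E : Set (Set V)) (S : Set V) : Prop :=
  IsHittingSet E S ∧ ∀ S' ⊂ S, ¬ IsHittingSet E S'

/-!
A hitting set `S` is minimal iff every `v ∈ S` has a private hyperedge `B`, i.e. `S ∩ B ⊆ {v}`.
If `S ⊇ W` is minimal, the private hyperedges `B w` of the `w ∈ W` avoid `S` off `w`, so their
union `T` of the sets `B w \ {w}` lies in `Sᶜ` and contains no hyperedge. Conversely, if `T`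
contains no hyperedge then `Tᶜ` is a hitting set containing `W`; a hitting set `S` minimal among
those with `W ⊆ S ⊆ Tᶜ` is a minimal hitting set, since `B w` is a private hyperedge of `w ∈ S`
and every `v ∈ S \ W` has one by minimality.
-/

section

variable {V : Type*} {E : Set (Set V)} {S T : Set V}

theorem IsHittingSet.mono (hS : IsHittingSet E S) (hST : S ⊆ T) : IsHittingSet E T :=
  fun B hB => (hS B hB).mono (Set.inter_subset_inter_left B hST)

theorem isHittingSet_iff_forall_not_subset_compl :
    IsHittingSet E S ↔ ∀ A ∈ E, ¬ A ⊆ Sᶜ := by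
  simp only [IsHittingSet, Set.subset_compl_iff_disjoint_right, Set.not_disjoint_iff_nonempty_inter,
    Set.inter_comm]

theorem not_isHittingSet_diff_singleton_iff {v : V} :
    ¬ IsHittingSet E (S \ {v}) ↔ ∃ B ∈ E, S ∩ B ⊆ {v} := by
  simp only [IsHittingSet, not_forall, Set.not_nonempty_iff_eq_empty, Set.sdiff_inter_right_comm,
    Set.sdiff_eq_empty, exists_prop]

theorem isMinimalHittingSet_iff :
    IsMinimalHittingSet E S ↔ IsHittingSet E S ∧ ∀ v ∈ S, ∃ B ∈ E, S ∩ B ⊆ {v} := by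
  refine and_congr_right fun _ => ⟨fun hmin v hv => ?_, fun hpriv S' hS'S hS' => ?_⟩
  · exact not_isHittingSet_diff_singleton_iff.1 (hmin _ (Set.sdiff_singleton_ssubset.2 hv))
  · obtain ⟨v, hvS, hvS'⟩ := Set.exists_of_ssubset hS'S
    exact not_isHittingSet_diff_singleton_iff.2 (hpriv v hvS)
      (hS'.mono (Set.subset_sdiff_singleton hS'S.subset hvS'))

theorem isMinimalHittingSet_of_minimal {W : Set V}
    (hS : Minimal (fun S => W ⊆ S ∧ IsHittingSet E S) S)
    (hW : ∀ w ∈ W, ∃ B ∈ E, S ∩ B ⊆ {w}) : IsMinimalHittingSet E S := by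
  refine isMinimalHittingSet_iff.2 ⟨hS.prop.2, fun v hv => ?_⟩
  by_cases hvW : v ∈ W
  · exact hW v hvW
  · exact not_isHittingSet_diff_singleton_iff.1 fun h => hS.not_prop_of_ssubset
      (Set.sdiff_singleton_ssubset.2 hv) ⟨Set.subset_sdiff_singleton hS.prop.1 hvW, h⟩

end

/-- There is a minimal hitting set of `(V, E)` containing `W` iff one can choose,
for each `w ∈ W`, a hyperedge `B w ∈ E` with `w ∈ B w`, in such a way that no hyperedge
of `E` is contained in `⋃_{w ∈ W} (B w \ {w})`. -/
theorem exists_minimal_hittingSet_superset_iff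
    {V : Type*} [Finite V] (E : Set (Set V)) (W : Set V) :
    (∃ S : Set V, W ⊆ S ∧ IsMinimalHittingSet E S) ↔
      ∃ B : W → Set V, (∀ w : W, B w ∈ E ∧ (w : V) ∈ B w) ∧
        ∀ A ∈ E, ¬ A ⊆ ⋃ w : W, (B w \ {(w : V)}) := by
  constructor
  · rintro ⟨S, hWS, hS⟩
    obtain ⟨hhit, hpriv⟩ := isMinimalHittingSet_iff.1 hS
    choose B hBE hBS using fun w : W => hpriv w (hWS w.2)
    have hBw (w : W) : S ∩ B w = {(w : V)} := (hhit _ (hBE w)).subset_singleton_iff.1 (hBS w)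
    have hT : ⋃ w : W, (B w \ {(w : V)}) ⊆ Sᶜ :=
      Set.iUnion_subset fun w x hx hxS => hx.2 (hBS w ⟨hxS, hx.1⟩)
    refine ⟨B, fun w => ⟨hBE w, ((hBw w).ge (Set.mem_singleton _)).2⟩, ?_⟩
    exact fun A hA hAT => isHittingSet_iff_forall_not_subset_compl.1 hhit A hA (hAT.trans hT)
  · rintro ⟨B, hB, hno⟩
    set T := ⋃ w : W, (B w \ {(w : V)})
    have hBT (w : W) : B w ⊆ insert (w : V) T :=
      Set.sdiff_singleton_subset_iff.1 (Set.subset_iUnion (fun w : W => B w \ {(w : V)}) w)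
    have hWT : W ⊆ Tᶜ := fun w hw hwT =>
      hno _ (hB ⟨w, hw⟩).1 ((hBT ⟨w, hw⟩).trans (Set.insert_subset hwT subset_rfl))
    have hTc : IsHittingSet E Tᶜ :=
      isHittingSet_iff_forall_not_subset_compl.2 (by simpa only [compl_compl] using hno)
    obtain ⟨S, hST, hS⟩ := exists_minimal_le_of_wellFoundedLT
      (fun S => W ⊆ S ∧ IsHittingSet E S) Tᶜ ⟨hWT, hTc⟩
    refine ⟨S, hS.prop.1, isMinimalHittingSet_of_minimal hS fun w hw => ⟨_, (hB ⟨w, hw⟩).1, ?_⟩⟩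
    rintro x ⟨hxS, hxB⟩
    exact (hBT ⟨w, hw⟩ hxB).resolve_right (hST hxS)
end

section
/- Let H = (V, E) be a hypergraph with V finite, let v ∈ V, and let S₁, …, S_{k−1} be pairwise distinct minimal hitting sets of H. Then there exists a minimal hitting set S of H with v ∈ S and S ≠ S_i for every 1 ≤ i ≤ k−1 if and only if there exist a hyperedge B ∈ E with v ∈ B and nodes s₁, …, s_{k−1} with s_i ∈ S_i for each i, such that V \ ((B \ {v}) ∪ {s₁, …, s_{k−1}}) is a hitting set of H. -/
section HittingSet

variable {V : Type*} {E : Set (Set V)} {S T : Set V}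

theorem IsHittingSet.exists_isMinimalHittingSet_subset [Finite V] (hS : IsHittingSet E S) :
    ∃ T ⊆ S, IsMinimalHittingSet E T := by
  obtain ⟨T, ⟨hT, hTS⟩, hTmin⟩ :=
    (wellFounded_lt (α := Set V)).has_min {T | IsHittingSet E T ∧ T ⊆ S} ⟨S, hS, subset_rfl⟩
  exact ⟨T, hTS, hT, fun T' hT'T hT' => hTmin T' ⟨hT', hT'T.subset.trans hTS⟩ hT'T⟩

theorem IsMinimalHittingSet.eq_of_subset (hT : IsMinimalHittingSet E T) (hS : IsHittingSet E S)
    (hST : S ⊆ T) : S = T := by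
  by_contra hne
  exact hT.2 S (hST.ssubset_of_ne hne) hS

theorem IsMinimalHittingSet.exists_inter_eq_singleton (hT : IsMinimalHittingSet E T) {v : V}
    (hv : v ∈ T) : ∃ B ∈ E, T ∩ B = {v} := by
  have hnot : ¬ IsHittingSet E (T \ {v}) := hT.2 _ (Set.sdiff_singleton_ssubset.mpr hv)
  simp only [IsHittingSet, not_forall, Set.not_nonempty_iff_eq_empty, exists_prop] at hnot
  obtain ⟨B, hB, hTB⟩ := hnot
  refine ⟨B, hB, (hT.1 B hB).subset_singleton_iff.mp fun y ⟨hyT, hyB⟩ => ?_⟩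
  by_contra hyv
  exact Set.eq_empty_iff_forall_notMem.mp hTB y ⟨⟨hyT, hyv⟩, hyB⟩

end HittingSet

theorem exists_new_minimal_hittingSet_iff_general
    {V : Type*} [Finite V] (E : Set (Set V)) (v : V)
    {n : ℕ} (S : Fin n → Set V)
    (hmin : ∀ i, IsMinimalHittingSet E (S i)) :
    (∃ T : Set V, IsMinimalHittingSet E T ∧ v ∈ T ∧ ∀ i, T ≠ S i) ↔
      ∃ B ∈ E, v ∈ B ∧ ∃ s : Fin n → V, (∀ i, s i ∈ S i) ∧
        IsHittingSet E (Set.univ \ ((B \ {v}) ∪ Set.range s)) := by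
  constructor
  · rintro ⟨T, hT, hvT, hTS⟩
    obtain ⟨B, hB, hTB⟩ := hT.exists_inter_eq_singleton hvT
    have hescape : ∀ i, ∃ y ∈ S i, y ∉ T := fun i => by
      by_contra! hST
      exact hTS i (hT.eq_of_subset (hmin i).1 hST).symm
    choose s hsS hsT using hescape
    refine ⟨B, hB, (hTB.ge rfl).2, s, hsS, hT.1.mono fun y hyT => ⟨trivial, ?_⟩⟩
    rintro (⟨hyB, hyv⟩ | ⟨i, rfl⟩)
    · exact hyv (hTB.le ⟨hyT, hyB⟩)
    · exact hsT i hyT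
  · rintro ⟨B, hB, -, s, hsS, hU⟩
    obtain ⟨T, hTU, hT⟩ := hU.exists_isMinimalHittingSet_subset
    obtain ⟨y, hyT, hyB⟩ := hT.1 B hB
    have hyv : y = v := by
      by_contra hyv
      exact (hTU hyT).2 (Or.inl ⟨hyB, hyv⟩)
    exact ⟨T, hT, hyv ▸ hyT, fun i hTS => (hTU (hTS ▸ hsS i)).2 (Or.inr ⟨i, rfl⟩)⟩

/-- Given `n` pairwise distinct minimal hitting sets `S 0, …, S (n-1)` and a node `v`,
there is a further minimal hitting set containing `v` and distinct from all of them iff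
there are a hyperedge `B ∈ E` with `v ∈ B` and nodes `s i ∈ S i` such that
`V \ ((B \ {v}) ∪ {s 0, …, s (n-1)})` is a hitting set. -/
theorem exists_new_minimal_hittingSet_iff
    {V : Type*} [Finite V] (E : Set (Set V)) (v : V)
    {n : ℕ} (S : Fin n → Set V)
    (hmin : ∀ i, IsMinimalHittingSet E (S i)) (hdist : Function.Injective S) :
    (∃ T : Set V, IsMinimalHittingSet E T ∧ v ∈ T ∧ ∀ i, T ≠ S i) ↔
      ∃ B ∈ E, v ∈ B ∧ ∃ s : Fin n → V, (∀ i, s i ∈ S i) ∧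
        IsHittingSet E (Set.univ \ ((B \ {v}) ∪ Set.range s)) :=
  exists_new_minimal_hittingSet_iff_general E v S hmin
end

section
/- Let H = (V_H, E_H) be a hypergraph with V_H finite and E_H a finite family of subsets, and let F be a set of unordered pairs of distinct nodes of V_H (the forbidden pairs). Define the finite simple graph G on vertex set V_H ⊔ E_H (disjoint union) with an edge between the copies of v and w for every {v, w} ∈ F, and an edge between the copy of v and the copy of B whenever v ∈ B ∈ E_H. Then there exists a hitting set S of H containing no forbidden pair of F (i.e., for every {v, w} ∈ F not both v ∈ S and w ∈ S) if and only if there exists a minimal vertex cover C of G that contains the copy of every hyperedge B ∈ E_H. -/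
/-!
Vertex covers are the complements of independent sets, and minimal vertex covers the
complements of maximal independent sets. A hitting set avoiding `F` is, on the node side, an
independent set of the graph; extend it by Zorn's lemma to a maximal independent set `M`. Each
hyperedge contains a node of `M`, hence its vertex is not in `M`, i.e. it lies in the cover `Mᶜ`.
Conversely, if the vertex of a hyperedge `B` is outside a maximal independent set `M`, maximality
gives a neighbour of it in `M`, which must be a node of `B`; so the nodes in `M` form a hitting
set, and independence means they contain no forbidden pair.
-/

/-- `C` is a vertex cover of the graph `G`: it contains an endpoint of every edge. -/
def IsVertexCover {α : Type*} (G : SimpleGraph α) (C : Set α) : Prop :=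
  ∀ a b, G.Adj a b → a ∈ C ∨ b ∈ C

/-- `C` is a minimal vertex cover: a vertex cover no proper subset of which is
a vertex cover. -/
def IsMinimalVertexCover {α : Type*} (G : SimpleGraph α) (C : Set α) : Prop :=
  IsVertexCover G C ∧ ∀ C' ⊂ C, ¬ IsVertexCover G C'

/-- The graph associated to a hypergraph `(V, E)` with forbidden pairs `F`: its vertices
are the nodes of `V` together with one vertex per hyperedge; there is an edge between
`v` and `w` for every forbidden pair `{v, w} ∈ F`, and an edge between `v` and (the
vertex of) `B` whenever `v ∈ B ∈ E`. -/
def forbiddenPairsGraph {V : Type*} (E : Finset (Finset V)) (F : Set (Sym2 V)) :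
    SimpleGraph (V ⊕ {B : Finset V // B ∈ E}) :=
  SimpleGraph.fromRel (fun a b =>
    match a, b with
    | Sum.inl v, Sum.inl w => s(v, w) ∈ F
    | Sum.inl v, Sum.inr B => v ∈ B.1
    | _, _ => False)

section VertexCover

variable {α : Type*} {G : SimpleGraph α}

theorem isVertexCover_iff_isIndepSet_compl {C : Set α} :
    IsVertexCover G C ↔ G.IsIndepSet Cᶜ :=
  ⟨fun h => SimpleGraph.isIndepSet_compl_iff_isVertexCover.2 fun _ _ => h _ _,
    fun h _ _ hab => SimpleGraph.isIndepSet_compl_iff_isVertexCover.1 h hab⟩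

theorem isMinimalVertexCover_iff_maximal_isIndepSet_compl {C : Set α} :
    IsMinimalVertexCover G C ↔ Maximal G.IsIndepSet Cᶜ := by
  rw [Set.maximal_iff_forall_ssuperset, IsMinimalVertexCover, isVertexCover_iff_isIndepSet_compl]
  refine and_congr_right fun _ => (compl_surjective.forall.trans ?_).symm
  simp only [Set.ssubset_def, Set.compl_subset_compl, isVertexCover_iff_isIndepSet_compl]

theorem SimpleGraph.IsIndepSet.exists_maximal_superset {s : Set α} (hs : G.IsIndepSet s) :
    ∃ t, s ⊆ t ∧ Maximal G.IsIndepSet t :=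
  zorn_subset_nonempty {t | G.IsIndepSet t}
    (fun c hc hchain _ => ⟨⋃₀ c, hchain.pairwise_sUnion.2 hc, fun _ => Set.subset_sUnion_of_mem⟩)
    s hs

theorem Maximal.exists_adj_of_notMem {s : Set α} (hs : Maximal G.IsIndepSet s) {v : α}
    (hv : v ∉ s) : ∃ w ∈ s, G.Adj v w := by
  by_contra! h
  refine hv (hs.mem_of_prop_insert ?_)
  exact Set.pairwise_insert.2 ⟨hs.prop, fun w hw _ => ⟨h w hw, fun hwv => h w hw hwv.symm⟩⟩

end VertexCover

section forbiddenPairsGraph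

variable {V : Type*} {E : Finset (Finset V)} {F : Set (Sym2 V)}

@[simp]
theorem forbiddenPairsGraph_adj_inl_inl {v w : V} :
    (forbiddenPairsGraph E F).Adj (.inl v) (.inl w) ↔ v ≠ w ∧ s(v, w) ∈ F := by
  simp [forbiddenPairsGraph, Sym2.eq_swap]

@[simp]
theorem forbiddenPairsGraph_adj_inl_inr {v : V} {B : {B : Finset V // B ∈ E}} :
    (forbiddenPairsGraph E F).Adj (.inl v) (.inr B) ↔ v ∈ B.1 := by
  simp [forbiddenPairsGraph]

@[simp]
theorem forbiddenPairsGraph_not_adj_inr_inr {B B' : {B : Finset V // B ∈ E}} :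
    ¬ (forbiddenPairsGraph E F).Adj (.inr B) (.inr B') := by
  simp [forbiddenPairsGraph]

theorem isIndepSet_image_inl_iff (hF : ∀ p ∈ F, ¬ p.IsDiag) {S : Set V} :
    (forbiddenPairsGraph E F).IsIndepSet (Sum.inl '' S) ↔
      ∀ v w : V, s(v, w) ∈ F → ¬ (v ∈ S ∧ w ∈ S) := by
  constructor
  · rintro hS v w hvw ⟨hv, hw⟩
    have hne : v ≠ w := fun h => hF _ hvw (h ▸ Sym2.mk_isDiag_iff.2 rfl)
    exact hS ⟨v, hv, rfl⟩ ⟨w, hw, rfl⟩ (Sum.inl_injective.ne hne)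
      (forbiddenPairsGraph_adj_inl_inl.2 ⟨hne, hvw⟩)
  · rintro hS _ ⟨v, hv, rfl⟩ _ ⟨w, hw, rfl⟩ - hvw
    exact hS v w (forbiddenPairsGraph_adj_inl_inl.1 hvw).2 ⟨hv, hw⟩

theorem Maximal.preimage_inl_inter_nonempty {M : Set (V ⊕ {B : Finset V // B ∈ E})}
    (hM : Maximal (forbiddenPairsGraph E F).IsIndepSet M) {B : {B : Finset V // B ∈ E}}
    (hB : Sum.inr B ∉ M) : (Sum.inl ⁻¹' M ∩ ↑B.1).Nonempty := by
  obtain ⟨v | B', hv, hadj⟩ := hM.exists_adj_of_notMem hB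
  · exact ⟨v, hv, forbiddenPairsGraph_adj_inl_inr.1 hadj.symm⟩
  · exact absurd hadj forbiddenPairsGraph_not_adj_inr_inr

end forbiddenPairsGraph

theorem hittingSet_avoiding_forbidden_pairs_iff_minimal_vertexCover_general
    {V : Type*} (E : Finset (Finset V)) (F : Set (Sym2 V)) (hF : ∀ p ∈ F, ¬ p.IsDiag) :
    (∃ S : Set V, (∀ B ∈ E, (S ∩ ↑B).Nonempty) ∧
        ∀ v w : V, s(v, w) ∈ F → ¬ (v ∈ S ∧ w ∈ S)) ↔
      ∃ C : Set (V ⊕ {B : Finset V // B ∈ E}),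
        IsMinimalVertexCover (forbiddenPairsGraph E F) C ∧
          ∀ B : {B : Finset V // B ∈ E}, Sum.inr B ∈ C := by
  simp only [isMinimalVertexCover_iff_maximal_isIndepSet_compl]
  constructor
  · rintro ⟨S, hS, hSF⟩
    obtain ⟨M, hSM, hM⟩ := ((isIndepSet_image_inl_iff hF).2 hSF).exists_maximal_superset
    refine ⟨Mᶜ, by rwa [compl_compl], fun B hB => ?_⟩
    obtain ⟨u, huS, huB⟩ := hS B.1 B.2
    exact hM.prop (hSM ⟨u, huS, rfl⟩) hB Sum.inl_ne_inr (forbiddenPairsGraph_adj_inl_inr.2 huB)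
  · rintro ⟨C, hC, hE⟩
    refine ⟨Sum.inl ⁻¹' Cᶜ, fun B hB => hC.preimage_inl_inter_nonempty (not_not.2 (hE ⟨B, hB⟩)),
      (isIndepSet_image_inl_iff hF).1 (hC.prop.mono (Set.image_preimage_subset _ _))⟩

/-- `(V, E)` has a hitting set containing no forbidden pair of `F` iff the associated
graph has a minimal vertex cover containing the vertex of every hyperedge. -/
theorem hittingSet_avoiding_forbidden_pairs_iff_minimal_vertexCover
    {V : Type*} [Fintype V] [DecidableEq V]
    (E : Finset (Finset V)) (F : Set (Sym2 V)) (hF : ∀ p ∈ F, ¬ p.IsDiag) :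
    (∃ S : Set V, (∀ B ∈ E, (S ∩ ↑B).Nonempty) ∧
        ∀ v w : V, s(v, w) ∈ F → ¬ (v ∈ S ∧ w ∈ S)) ↔
      ∃ C : Set (V ⊕ {B : Finset V // B ∈ E}),
        IsMinimalVertexCover (forbiddenPairsGraph E F) C ∧
          ∀ B : {B : Finset V // B ∈ E}, Sum.inr B ∈ C :=
  hittingSet_avoiding_forbidden_pairs_iff_minimal_vertexCover_general E F hF
end
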